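/- arXiv:1805.12119 — 2 statements merged into one kernel-verified Lean document; each statement's English description precedes it below -/
import Mathlib

section
/- A finite group G is an elementary abelian 2-group of rank at least 2 if and only if its power graph 𝒢(G) is non-complete and minimally connected. -/
open Subgroup

/-- The power graph of a group: distinct `u`, `v` are adjacent iff one is a
positive integer power of the other. -/
def powerGraph (G : Type*) [Group G] : SimpleGraph G where
  Adj u v := u ≠ v ∧ ((∃ n : ℕ, 0 < n ∧ v = u ^ n) ∨ (∃ m : ℕ, 0 < m ∧ u = v ^ m))
  symm := ⟨fun u v h => ⟨h.1.symm, h.2.symm⟩⟩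
  loopless := ⟨fun u h => h.1 rfl⟩

/-- The degree of a vertex in a graph. -/
noncomputable def gDegree {V : Type*} (Γ : SimpleGraph V) (x : V) : ℕ :=
  (Γ.neighborSet x).ncard

/-- The minimum degree δ(Γ) of a graph. -/
noncomputable def gMinDegree {V : Type*} (Γ : SimpleGraph V) : ℕ :=
  sInf (Set.range (gDegree Γ))

/-- The edge-connectivity κ'(Γ): the least size of a set of edges whose deletion
disconnects the graph. -/
noncomputable def edgeConn {V : Type*} (Γ : SimpleGraph V) : ℕ :=
  sInf {k | ∃ s : Finset (Sym2 V), s.card = k ∧ ↑s ⊆ Γ.edgeSet ∧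
    ¬ (Γ.deleteEdges ↑s).Connected}

/-- The vertex connectivity κ(Γ): the least size of a set of vertices whose deletion
disconnects the graph or leaves at most one vertex. -/
noncomputable def vertConn {V : Type*} (Γ : SimpleGraph V) : ℕ :=
  sInf {k | ∃ S : Set V, S.Finite ∧ S.ncard = k ∧
    (¬ (Γ.induce Sᶜ).Preconnected ∨ Sᶜ.Subsingleton)}

/-- A nontrivial connected graph is minimally edge-connected if deleting any edge
drops the edge-connectivity by exactly one. -/
def MinimallyEdgeConnected {V : Type*} (Γ : SimpleGraph V) : Prop :=
  Nontrivial V ∧ Γ.Connected ∧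
    ∀ e ∈ Γ.edgeSet, edgeConn (Γ.deleteEdges {e}) = edgeConn Γ - 1

/-- A nontrivial connected graph is minimally connected if deleting any edge
drops the vertex connectivity by exactly one. -/
def MinimallyConnected {V : Type*} (Γ : SimpleGraph V) : Prop :=
  Nontrivial V ∧ Γ.Connected ∧
    ∀ e ∈ Γ.edgeSet, vertConn (Γ.deleteEdges {e}) = vertConn Γ - 1

/-- `S` is a separating set of `Γ` if deleting the vertices of `S` leaves a
disconnected graph. -/
def IsSeparatingSet {V : Type*} (Γ : SimpleGraph V) (S : Set V) : Prop :=
  ¬ (Γ.induce Sᶜ).Preconnected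

/-- `S` is a minimum separating set of `Γ`. -/
def IsMinSeparatingSet {V : Type*} (Γ : SimpleGraph V) (S : Set V) : Prop :=
  IsSeparatingSet Γ S ∧ ∀ T : Set V, IsSeparatingSet Γ T → S.ncard ≤ T.ncard

/-- `y` generates a maximal cyclic subgroup of `G`: the cyclic subgroup `⟨y⟩` is
not properly contained in any cyclic subgroup. -/
def IsMaxCyclicGen {G : Type*} [Group G] (y : G) : Prop :=
  ∀ z : G, zpowers y ≤ zpowers z → zpowers y = zpowers z

/-- A subgroup is maximal cyclic if it is cyclic and not properly contained in
any cyclic subgroup. -/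
def IsMaximalCyclicSubgroup {G : Type*} [Group G] (H : Subgroup G) : Prop :=
  (∃ y : G, H = zpowers y) ∧ ∀ z : G, H ≤ zpowers z → H = zpowers z

/-!
If every non-identity element has order 2, then `y` is a power of `x` only for `y ∈ {1, x}`, so
the power graph is the star centred at `1`; a star has connectivity `1`, and deleting any of its
edges isolates a leaf.

Conversely, an element `x` of order at least 3 is adjacent to `x⁻¹ ≠ x`, and since
`⟨x⟩ = ⟨x⁻¹⟩` these two vertices are twins: apart from each other they have the same neighbours.
In a non-complete graph, deleting the edge between twins `x`, `y` cannot lower the connectivity.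
Indeed, suppose `S` separates the smaller graph and is smaller than every separating set of the
original graph. If a common neighbour of `x` and `y` lies outside `S`, it reroutes the deleted
edge, so `S` separates the original graph, which is absurd; otherwise `S` contains `N(x) \ {y}`,
which separates `{x, y}` from the remaining vertices (there are some, as the graph is not
complete). Finally, two distinct involutions `a`, `b` give four elements `1, a, b, ab`.
-/

namespace SimpleGraph

variable {V : Type*} {Γ : SimpleGraph V}

theorem Reachable.mem_of_adj_closed {K : Set V} (hK : ∀ u v, u ∈ K → Γ.Adj u v → v ∈ K)
    {u v : V} (hu : u ∈ K) (h : Γ.Reachable u v) : v ∈ K := by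
  rw [reachable_iff_reflTransGen] at h
  induction h with
  | refl => exact hu
  | tail _ hadj ih => exact hK _ _ ih hadj

theorem not_preconnected_of_adj_closed {K : Set V} (hK : ∀ u v, u ∈ K → Γ.Adj u v → v ∈ K)
    {u v : V} (hu : u ∈ K) (hv : v ∉ K) : ¬ Γ.Preconnected :=
  fun h => hv ((h u v).mem_of_adj_closed hK hu)

theorem Preconnected.induce_deleteEdges_of_adj_adj {T : Set V} {x y w : V}
    (hT : (Γ.induce T).Preconnected) (hw : w ∈ T) (hxw : Γ.Adj x w) (hyw : Γ.Adj y w) :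
    ((Γ.deleteEdges {s(x, y)}).induce T).Preconnected := by
  have hxw' : (Γ.deleteEdges {s(x, y)}).Adj x w := by
    simp [deleteEdges_adj, hxw, hxw.ne', hyw.ne']
  have hyw' : (Γ.deleteEdges {s(x, y)}).Adj y w := by
    simp [deleteEdges_adj, hyw, hxw.ne', hyw.ne']
  intro a b
  rw [reachable_iff_reflTransGen]
  refine Relation.reflTransGen_closed (fun c d hcd => ?_) _ _
    ((reachable_iff_reflTransGen a b).mp (hT a b))
  rw [← reachable_iff_reflTransGen]
  by_cases he : s((c : V), d) = s(x, y)
  · rcases Sym2.eq_iff.mp he with ⟨hc, hd⟩ | ⟨hc, hd⟩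
    · exact (Adj.reachable (v := ⟨w, hw⟩) (by simpa [hc] using hxw')).trans
        (Adj.reachable (by simpa [hd] using hyw'.symm))
    · exact (Adj.reachable (v := ⟨w, hw⟩) (by simpa [hc] using hyw')).trans
        (Adj.reachable (by simpa [hd] using hxw'.symm))
  · exact Adj.reachable ((deleteEdges_adj ..).mpr ⟨hcd, he⟩)

theorem not_preconnected_starGraph_deleteEdges {r a : V} (ha : a ≠ r) :
    ¬ ((starGraph r).deleteEdges {s(r, a)}).Preconnected := by
  refine not_preconnected_of_adj_closed (K := {a}) ?_ rfl (Ne.symm ha)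
  rintro _ v rfl hav
  obtain ⟨hav, hne⟩ := (deleteEdges_adj ..).mp hav
  obtain rfl := (starGraph_adj.mp hav).2.resolve_left ha
  exact (hne Sym2.eq_swap).elim

theorem starGraph_ne_top {r a b : V} (ha : a ≠ r) (hb : b ≠ r) (hab : a ≠ b) :
    starGraph r ≠ ⊤ := fun h => by
  have hadj : (starGraph r).Adj a b := h ▸ hab
  simp [ha, hb] at hadj

end SimpleGraph

section VertexConnectivity

open SimpleGraph

variable {V : Type*} {Γ : SimpleGraph V}

theorem vertConn_le_ncard {S : Set V} (hS : S.Finite)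
    (h : ¬ (Γ.induce Sᶜ).Preconnected ∨ Sᶜ.Subsingleton) : vertConn Γ ≤ S.ncard :=
  Nat.sInf_le ⟨S, hS, rfl, h⟩

theorem exists_ncard_eq_vertConn [Finite V] (Γ : SimpleGraph V) :
    ∃ S : Set V, S.Finite ∧ S.ncard = vertConn Γ ∧
      (¬ (Γ.induce Sᶜ).Preconnected ∨ Sᶜ.Subsingleton) :=
  Nat.sInf_mem (s := {k | ∃ S : Set V, S.Finite ∧ S.ncard = k ∧ _})
    ⟨_, Set.univ, Set.toFinite _, rfl, Or.inr (by simp)⟩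

theorem vertConn_eq_zero_of_not_preconnected (h : ¬ Γ.Preconnected) : vertConn Γ = 0 := by
  have hind : ¬ (Γ.induce (∅ : Set V)ᶜ).Preconnected := by
    rwa [Set.compl_empty, (induceUnivIso Γ).preconnected_iff]
  simpa using vertConn_le_ncard Set.finite_empty (Or.inl hind)

theorem one_le_vertConn [Finite V] [Nontrivial V] (h : Γ.Connected) : 1 ≤ vertConn Γ := by
  obtain ⟨S, hSfin, hScard, hS⟩ := exists_ncard_eq_vertConn Γ
  rw [← hScard, Nat.one_le_iff_ne_zero, Ne, Set.ncard_eq_zero hSfin]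
  rintro rfl
  rw [Set.compl_empty, (induceUnivIso Γ).preconnected_iff] at hS
  exact hS.elim (· h.preconnected) fun hsub => not_subsingleton V ⟨fun a b => hsub trivial trivial⟩

theorem vertConn_add_two_le_card [Finite V] (h : Γ ≠ ⊤) : vertConn Γ + 2 ≤ Nat.card V := by
  obtain ⟨u, v, huv, hnadj⟩ := ne_top_iff_exists_not_adj.mp h
  have hsep : ¬ (Γ.induce ({u, v} : Set V)ᶜᶜ).Preconnected := by
    refine not_preconnected_of_adj_closed (K := {p | p.1 = u}) ?_ (u := ⟨u, by simp⟩)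
      (v := ⟨v, by simp⟩) rfl (Ne.symm huv)
    rintro ⟨a, ha⟩ ⟨b, hb⟩ (rfl : a = u) hab
    simp only [compl_compl, Set.mem_insert_iff, Set.mem_singleton_iff] at hb
    rcases hb with rfl | rfl
    · exact (Γ.loopless.irrefl _ hab).elim
    · exact (hnadj hab).elim
  have hle := vertConn_le_ncard (Set.toFinite _) (Or.inl hsep)
  have hcard := Set.ncard_add_ncard_compl ({u, v} : Set V)
  rw [Set.ncard_pair huv] at hcard
  omega

theorem not_preconnected_induce_compl_of_twins {x y z : V}
    (htwin : ∀ w, w ≠ x → w ≠ y → (Γ.Adj x w ↔ Γ.Adj y w))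
    (hz : z ∉ {w | Γ.Adj x w ∧ w ≠ y}) (hzx : z ≠ x) (hzy : z ≠ y) :
    ¬ (Γ.induce {w | Γ.Adj x w ∧ w ≠ y}ᶜ).Preconnected := by
  refine not_preconnected_of_adj_closed (K := {p | p.1 = x ∨ p.1 = y}) ?_
    (u := ⟨x, fun hx => Γ.loopless.irrefl _ hx.1⟩) (v := ⟨z, hz⟩) (Or.inl rfl) (by simp [hzx, hzy])
  rintro ⟨a, _⟩ ⟨b, hb⟩ (ha : a = x ∨ a = y) (hab : Γ.Adj a b)
  show b = x ∨ b = y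
  by_contra! hbxy
  have hxb : Γ.Adj x b := by
    rcases ha with rfl | rfl
    · exact hab
    · exact (htwin b hbxy.1 hbxy.2).mpr hab
  exact hb ⟨hxb, hbxy.2⟩

theorem vertConn_le_vertConn_deleteEdges_of_twins [Finite V] (htop : Γ ≠ ⊤) {x y : V}
    (htwin : ∀ w, w ≠ x → w ≠ y → (Γ.Adj x w ↔ Γ.Adj y w)) :
    vertConn Γ ≤ vertConn (Γ.deleteEdges {s(x, y)}) := by
  obtain ⟨S, hSfin, hScard, hS⟩ := exists_ncard_eq_vertConn (Γ.deleteEdges {s(x, y)})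
  rw [← hScard]
  by_contra! hlt
  refine hlt.not_ge (vertConn_le_ncard hSfin (hS.imp_left fun hdisc hpre => ?_))
  set M := {w | Γ.Adj x w ∧ w ≠ y}
  have hMS : M ⊆ S := fun w ⟨hxw, hwy⟩ => by
    by_contra hwS
    exact hdisc (hpre.induce_deleteEdges_of_adj_adj hwS hxw ((htwin w hxw.ne' hwy).mp hxw))
  have hMlt : M.ncard < vertConn Γ := (Set.ncard_le_ncard hMS hSfin).trans_lt hlt
  obtain ⟨z, hz⟩ : ∃ z, z ∉ M ∪ {x, y} := by
    by_contra! hall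
    have hcover : Nat.card V ≤ (M ∪ {x, y}).ncard := by
      rw [← Set.ncard_univ]
      exact Set.ncard_le_ncard fun z _ => hall z
    have hpair : ({x, y} : Set V).ncard ≤ 2 := (Set.ncard_insert_le x {y}).trans_eq (by simp)
    have := Set.ncard_union_le M {x, y}
    have := vertConn_add_two_le_card htop
    omega
  simp only [Set.mem_union, Set.mem_insert_iff, Set.mem_singleton_iff, not_or] at hz
  exact hMlt.not_ge (vertConn_le_ncard (Set.toFinite M)
    (Or.inl (not_preconnected_induce_compl_of_twins htwin hz.1 hz.2.1 hz.2.2)))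

theorem not_minimallyConnected_of_twins [Finite V] (htop : Γ ≠ ⊤) {x y : V} (hxy : Γ.Adj x y)
    (htwin : ∀ w, w ≠ x → w ≠ y → (Γ.Adj x w ↔ Γ.Adj y w)) : ¬ MinimallyConnected Γ := by
  rintro ⟨_, hconn, hdrop⟩
  have hle := vertConn_le_vertConn_deleteEdges_of_twins htop htwin
  rw [hdrop _ hxy] at hle
  have := one_le_vertConn hconn
  omega

theorem vertConn_starGraph [Finite V] [Nontrivial V] (r : V) : vertConn (starGraph r) = 1 := by
  refine le_antisymm ?_ (one_le_vertConn (connected_starGraph r))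
  have hleaves : ¬ ((starGraph r).induce {r}ᶜ).Preconnected ∨ ({r}ᶜ : Set V).Subsingleton := by
    refine ({r}ᶜ : Set V).subsingleton_or_nontrivial.symm.imp_left fun ⟨a, ha, b, hb, hab⟩ => ?_
    refine not_preconnected_of_adj_closed (K := {⟨a, ha⟩}) ?_ rfl (v := ⟨b, hb⟩)
      (by simpa using Ne.symm hab)
    rintro _ ⟨v, hv⟩ rfl hav
    simp only [Set.mem_compl_iff, Set.mem_singleton_iff] at ha hv
    exact ((starGraph_adj.mp hav).2.elim ha hv).elim
  simpa using vertConn_le_ncard (Set.finite_singleton r) hleaves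

theorem minimallyConnected_starGraph [Finite V] [Nontrivial V] (r : V) :
    MinimallyConnected (starGraph r) := by
  refine ⟨‹_›, connected_starGraph r, fun e he => ?_⟩
  rw [vertConn_starGraph]
  induction e using Sym2.ind with
  | h u v =>
    obtain ⟨huv, rfl | rfl⟩ := starGraph_adj.mp he
    · exact vertConn_eq_zero_of_not_preconnected (not_preconnected_starGraph_deleteEdges huv.symm)
    · rw [Sym2.eq_swap]
      exact vertConn_eq_zero_of_not_preconnected (not_preconnected_starGraph_deleteEdges huv)

end VertexConnectivity

section PowerGraph

open SimpleGraph

theorem eq_one_or_eq_of_mem_zpowers {G : Type*} [Group G] {u v : G} (hu : orderOf u = 2)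
    (hv : v ∈ zpowers u) : v = 1 ∨ v = u := by
  classical
  have hfin : IsOfFinOrder u := orderOf_pos_iff.mp (by omega)
  simpa [hfin.mem_zpowers_iff_mem_range_orderOf, hu, Finset.range_add_one, eq_comm, or_comm]
    using hv

variable {G : Type*} [Group G] [Finite G]

theorem exists_pos_pow_eq_iff_mem_zpowers {u v : G} :
    (∃ n : ℕ, 0 < n ∧ v = u ^ n) ↔ v ∈ zpowers u := by
  rw [← mem_powers_iff_mem_zpowers]
  constructor
  · rintro ⟨n, -, rfl⟩
    exact ⟨n, rfl⟩
  · rintro ⟨n, rfl : u ^ n = v⟩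
    rcases n.eq_zero_or_pos with rfl | hn
    · exact ⟨orderOf u, orderOf_pos u, by rw [pow_orderOf_eq_one, pow_zero]⟩
    · exact ⟨n, hn, rfl⟩

theorem powerGraph_adj_iff {u v : G} :
    (powerGraph G).Adj u v ↔ u ≠ v ∧ (v ∈ zpowers u ∨ u ∈ zpowers v) := by
  simp only [powerGraph, exists_pos_pow_eq_iff_mem_zpowers]

theorem powerGraph_adj_inv_iff {x w : G} (hwx : w ≠ x) (hwx' : w ≠ x⁻¹) :
    (powerGraph G).Adj x w ↔ (powerGraph G).Adj x⁻¹ w := by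
  simp only [powerGraph_adj_iff, zpowers_inv, inv_mem_iff, hwx.symm, hwx'.symm, ne_eq]

theorem orderOf_eq_two_of_minimallyConnected (htop : powerGraph G ≠ ⊤)
    (hmc : MinimallyConnected (powerGraph G)) {x : G} (hx : x ≠ 1) : orderOf x = 2 := by
  by_contra hx2
  have hne : x ≠ x⁻¹ := fun h =>
    hx2 (orderOf_eq_prime (by rw [sq]; exact mul_eq_one_iff_eq_inv.mpr h) hx)
  exact not_minimallyConnected_of_twins htop
    (powerGraph_adj_iff.mpr ⟨hne, Or.inl (inv_mem (mem_zpowers x))⟩)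
    (fun w hwx hwx' => powerGraph_adj_inv_iff hwx hwx') hmc

theorem powerGraph_eq_starGraph (hG : ∀ x : G, x ≠ 1 → orderOf x = 2) :
    powerGraph G = starGraph 1 := by
  ext u v
  rw [powerGraph_adj_iff, starGraph_adj, and_congr_right_iff]
  intro huv
  constructor
  · by_contra! h
    obtain ⟨hmem, hu, hv⟩ := h
    rcases hmem with hmem | hmem
    · exact (eq_one_or_eq_of_mem_zpowers (hG u hu) hmem).elim hv (Ne.symm huv)
    · exact (eq_one_or_eq_of_mem_zpowers (hG v hv) hmem).elim hu huv
  · rintro (rfl | rfl)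
    · exact Or.inr (one_mem _)
    · exact Or.inl (one_mem _)

end PowerGraph

theorem four_le_card_of_orderOf_eq_two {G : Type*} [Group G] [Fintype G] {a b : G}
    (ha : orderOf a = 2) (hb : orderOf b = 2) (hab : a ≠ b) : 4 ≤ Fintype.card G := by
  classical
  have hmul := mul_notMem_of_orderOf_eq_two ha hb hab
  simp only [Set.mem_insert_iff, Set.mem_singleton_iff, not_or] at hmul
  have ha1 : a ≠ 1 := by rintro rfl; simp at ha
  have hb1 : b ≠ 1 := by rintro rfl; simp at hb
  calc 4 = ({a * b, a, b, 1} : Finset G).card := by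
        simp [Finset.card_insert_of_notMem, hmul, hab, ha1, hb1]
    _ ≤ Fintype.card G := Finset.card_le_univ _

/-- A finite group `G` is an elementary abelian 2-group of rank at least 2 if and
only if its power graph is non-complete and minimally connected. -/
theorem stmt_1 (G : Type*) [Group G] [Fintype G] :
    ((∀ x : G, x ≠ 1 → orderOf x = 2) ∧ 4 ≤ Fintype.card G) ↔
      (powerGraph G ≠ ⊤ ∧ MinimallyConnected (powerGraph G)) := by
  classical
  constructor
  · rintro ⟨hG, hcard⟩
    obtain ⟨a, ha, b, hb, hab⟩ : ∃ a ∈ ({1}ᶜ : Finset G), ∃ b ∈ ({1}ᶜ : Finset G), a ≠ b :=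
      Finset.one_lt_card.mp (by rw [Finset.card_compl, Finset.card_singleton]; omega)
    rw [Finset.mem_compl, Finset.mem_singleton] at ha hb
    have : Nontrivial G := ⟨⟨a, 1, ha⟩⟩
    rw [powerGraph_eq_starGraph hG]
    exact ⟨SimpleGraph.starGraph_ne_top ha hb hab, minimallyConnected_starGraph 1⟩
  · rintro ⟨htop, hmc⟩
    have hG : ∀ x : G, x ≠ 1 → orderOf x = 2 := fun x =>
      orderOf_eq_two_of_minimallyConnected htop hmc
    obtain ⟨a, b, hab, hnadj⟩ := SimpleGraph.ne_top_iff_exists_not_adj.mp htop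
    rw [powerGraph_eq_starGraph hG, SimpleGraph.starGraph_adj, not_and, not_or] at hnadj
    exact ⟨hG, four_le_card_of_orderOf_eq_two (hG a (hnadj hab).1) (hG b (hnadj hab).2) hab⟩
end

section
/- Let G be a finite group such that the power graph 𝒢(G) is minimally edge-connected. If ⟨y⟩ is a maximal cyclic subgroup of G and the order of y is greater than 2, then the order of y equals δ(𝒢(G)) + 1. -/
/-!
In the power graph the identity is adjacent to every other vertex, and a generator `y` of a
maximal cyclic subgroup is adjacent exactly to the other elements of `⟨y⟩`, so `deg y = o(y) - 1`.
Minimality at the edge `{1, y}` yields an edge cut of size at most `κ'` separating `1` from `y`.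
Each neighbour `w` of `y` contributes its own edge to this cut: `{y, w}` if `w` lies on the side
of `1`, and `{1, w}` otherwise. Hence `o(y) - 1 ≤ κ' ≤ δ ≤ deg y = o(y) - 1`.
-/

open Subgroup

open SimpleGraph

section EdgeConnectivity

variable {V : Type*} {Γ : SimpleGraph V}

lemma edgeConn_le_card {s : Finset (Sym2 V)} (hs : ↑s ⊆ Γ.edgeSet)
    (h : ¬ (Γ.deleteEdges ↑s).Connected) : edgeConn Γ ≤ s.card :=
  Nat.sInf_le ⟨s, rfl, hs, h⟩

lemma gMinDegree_le_gDegree (Γ : SimpleGraph V) (x : V) : gMinDegree Γ ≤ gDegree Γ x :=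
  Nat.sInf_le ⟨x, rfl⟩

lemma not_connected_of_forall_not_adj [Nontrivial V] {x : V} (hx : ∀ w, ¬ Γ.Adj x w) :
    ¬ Γ.Connected := by
  intro hc
  obtain ⟨w, hw⟩ := exists_ne x
  obtain ⟨p⟩ := hc.preconnected x w
  cases p with
  | nil => exact hw rfl
  | cons hadj _ => exact hx _ hadj

lemma mem_of_adj_of_reachable_of_not_reachable {F : Set (Sym2 V)} {u a b : V}
    (hab : Γ.Adj a b) (ha : (Γ.deleteEdges F).Reachable u a)
    (hb : ¬ (Γ.deleteEdges F).Reachable u b) : s(a, b) ∈ F := by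
  by_contra hF
  exact hb (ha.trans (Adj.reachable (by rw [deleteEdges_adj]; exact ⟨hab, hF⟩)))

lemma gDegree_le_card_of_not_reachable {u v : V} (hu : ∀ w, w ≠ u → Γ.Adj u w)
    {F : Finset (Sym2 V)} (huv : ¬ (Γ.deleteEdges ↑F).Reachable u v) :
    gDegree Γ v ≤ F.card := by
  classical
  set R : Set V := {w | (Γ.deleteEdges ↑F).Reachable u w}
  have huR : u ∈ R := Reachable.refl u
  let f : V → Sym2 V := fun w => if w ∈ R then s(v, w) else s(u, w)
  have hmaps : ∀ w ∈ Γ.neighborSet v, f w ∈ (F : Set (Sym2 V)) := by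
    intro w hw
    by_cases hwR : w ∈ R
    · simpa [f, hwR, Sym2.eq_swap] using
        mem_of_adj_of_reachable_of_not_reachable hw.symm hwR huv
    · simpa [f, hwR] using
        mem_of_adj_of_reachable_of_not_reachable (hu w (by rintro rfl; exact hwR huR)) huR hwR
  have hinj : Set.InjOn f (Γ.neighborSet v) := by
    intro w hw w' hw' hww'
    have hvw : v ≠ w := Adj.ne hw
    have hvw' : v ≠ w' := Adj.ne hw'
    by_cases hwR : w ∈ R <;> by_cases hw'R : w' ∈ R <;> simp only [f, hwR, hw'R, ↓reduceIte, Sym2.eq_iff] at hww' <;> grind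
  rw [gDegree, ← Set.ncard_coe_finset]
  exact Set.ncard_le_ncard_of_injOn f hmaps hinj F.finite_toSet

section Finite

variable [Finite V] [Nontrivial V]

lemma exists_card_eq_edgeConn (Γ : SimpleGraph V) :
    ∃ s : Finset (Sym2 V), s.card = edgeConn Γ ∧ ↑s ⊆ Γ.edgeSet ∧
      ¬ (Γ.deleteEdges ↑s).Connected := by
  apply Nat.sInf_mem (s := {k | ∃ s : Finset (Sym2 V), s.card = k ∧ ↑s ⊆ Γ.edgeSet ∧
    ¬ (Γ.deleteEdges ↑s).Connected})
  exact ⟨_, Γ.edgeSet.toFinite.toFinset, rfl, by simp, by simpa using not_connected_bot⟩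

lemma edgeConn_pos (hΓ : Γ.Connected) : 0 < edgeConn Γ := by
  obtain ⟨s, hs, -, hdisc⟩ := exists_card_eq_edgeConn Γ
  refine Nat.pos_of_ne_zero fun h0 => hdisc ?_
  rw [h0, Finset.card_eq_zero] at hs
  simpa [hs] using hΓ

lemma edgeConn_le_gDegree (Γ : SimpleGraph V) (x : V) : edgeConn Γ ≤ gDegree Γ x := by
  classical
  have hcard : (Γ.incidenceSet x).ncard = gDegree Γ x :=
    Nat.card_congr (Γ.incidenceSetEquivNeighborSet x)
  rw [← hcard, Set.ncard_eq_toFinset_card _ (Set.toFinite _)]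
  refine edgeConn_le_card (by simpa using Γ.incidenceSet_subset x)
    (not_connected_of_forall_not_adj (x := x) fun w hw => ?_)
  rw [deleteEdges_adj] at hw
  exact hw.2 (by simpa using hw.1)

lemma edgeConn_le_gMinDegree (Γ : SimpleGraph V) : edgeConn Γ ≤ gMinDegree Γ := by
  obtain ⟨x, hx⟩ := Nat.sInf_mem (Set.range_nonempty (gDegree Γ))
  rw [gMinDegree, ← hx]
  exact edgeConn_le_gDegree Γ x

/-- The cut is a minimum cut of `Γ - s(u, v)` together with `s(u, v)`: the minimum cut alone
leaves `Γ` connected, so `s(u, v)` is a bridge of what remains. -/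
lemma exists_card_le_edgeConn_not_reachable (hΓ : Γ.Connected) {u v : V}
    (hmin : edgeConn (Γ.deleteEdges {s(u, v)}) = edgeConn Γ - 1) :
    ∃ F : Finset (Sym2 V), F.card ≤ edgeConn Γ ∧ ¬ (Γ.deleteEdges ↑F).Reachable u v := by
  classical
  obtain ⟨s, hs, hsub, hdisc⟩ := exists_card_eq_edgeConn (Γ.deleteEdges {s(u, v)})
  have hsΓ : ↑s ⊆ Γ.edgeSet := hsub.trans (edgeSet_mono (deleteEdges_le _))
  have hpos := edgeConn_pos hΓ
  have hconn : (Γ.deleteEdges ↑s).Connected := by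
    by_contra hnc
    have := edgeConn_le_card hsΓ hnc
    omega
  refine ⟨insert s(u, v) s, (Finset.card_insert_le _ _).trans (by omega), fun hre => hdisc ?_⟩
  have hF : Γ.deleteEdges ↑(insert s(u, v) s) = (Γ.deleteEdges ↑s).deleteEdges {s(u, v)} := by
    rw [deleteEdges_deleteEdges, Finset.coe_insert, Set.insert_eq, Set.union_comm]
  rw [deleteEdges_deleteEdges, Set.union_comm, ← deleteEdges_deleteEdges]
  exact hconn.connected_delete_edge_of_not_isBridge (by rwa [isBridge_iff, not_not, ← hF])

end Finite

theorem MinimallyEdgeConnected.gMinDegree_eq_gDegree [Finite V] (h : MinimallyEdgeConnected Γ)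
    {u v : V} (hu : ∀ w, w ≠ u → Γ.Adj u w) (huv : Γ.Adj u v) : gMinDegree Γ = gDegree Γ v := by
  obtain ⟨_, hconn, hmin⟩ := h
  obtain ⟨F, hF, hsep⟩ := exists_card_le_edgeConn_not_reachable hconn (hmin _ huv)
  exact le_antisymm (gMinDegree_le_gDegree Γ v)
    ((gDegree_le_card_of_not_reachable hu hsep).trans (hF.trans (edgeConn_le_gMinDegree Γ)))

end EdgeConnectivity

section PowerGraph

variable {G : Type*} [Group G]

lemma powerGraph_adj_one [Finite G] {x : G} (hx : x ≠ 1) : (powerGraph G).Adj 1 x :=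
  ⟨hx.symm, Or.inr ⟨orderOf x, orderOf_pos x, (pow_orderOf_eq_one x).symm⟩⟩

namespace IsMaxCyclicGen

variable {y : G}

lemma ne_one [Nontrivial G] (hy : IsMaxCyclicGen y) : y ≠ 1 := by
  rintro rfl
  obtain ⟨z, hz⟩ := exists_ne (1 : G)
  have := hy z (by simp)
  exact hz (by simpa using this.symm)

lemma neighborSet_powerGraph [Finite G] (hy : IsMaxCyclicGen y) :
    (powerGraph G).neighborSet y = (zpowers y : Set G) \ {y} := by
  ext x
  simp only [SimpleGraph.mem_neighborSet, Set.mem_sdiff, Set.mem_singleton_iff, SetLike.mem_coe]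
  constructor
  · rintro ⟨hne, ⟨n, -, rfl⟩ | ⟨m, -, hm⟩⟩
    · exact ⟨npow_mem_zpowers y n, hne.symm⟩
    · refine ⟨?_, hne.symm⟩
      rw [hy x (zpowers_le.mpr (hm ▸ npow_mem_zpowers x m))]
      exact mem_zpowers x
  · rintro ⟨hx, hne⟩
    obtain ⟨n, rfl⟩ := mem_powers_iff_mem_zpowers.mpr hx
    refine ⟨Ne.symm hne, Or.inl ⟨n + orderOf y, by have := orderOf_pos y; omega, ?_⟩⟩
    rw [pow_add, pow_orderOf_eq_one, mul_one]

lemma gDegree_powerGraph [Finite G] (hy : IsMaxCyclicGen y) : gDegree (powerGraph G) y = orderOf y - 1 := by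
  rw [gDegree, hy.neighborSet_powerGraph, Set.ncard_sdiff_singleton_of_mem (mem_zpowers y),
    ← Nat.card_zpowers]
  rfl

end IsMaxCyclicGen

end PowerGraph

theorem stmt_3_general (G : Type*) [Group G] [Fintype G]
    (h : MinimallyEdgeConnected (powerGraph G)) (y : G) (hy : IsMaxCyclicGen y) :
    orderOf y = gMinDegree (powerGraph G) + 1 := by
  have : Nontrivial G := h.1
  rw [h.gMinDegree_eq_gDegree (fun _ => powerGraph_adj_one) (powerGraph_adj_one hy.ne_one),
    hy.gDegree_powerGraph]
  have := orderOf_pos y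
  omega

/-- If the power graph of a finite group is minimally edge-connected, `⟨y⟩` is a
maximal cyclic subgroup and `y` has order greater than 2, then the order of `y`
equals the minimum degree plus one. -/
theorem stmt_3 (G : Type*) [Group G] [Fintype G]
    (h : MinimallyEdgeConnected (powerGraph G)) (y : G) (hy : IsMaxCyclicGen y)
    (hy2 : 2 < orderOf y) :
    orderOf y = gMinDegree (powerGraph G) + 1 :=
  stmt_3_general G h y hy
end
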